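/- Let R be a finite commutative Frobenius ring of characteristic 2 and let G be the cyclic group of order n, with elements enumerated as 1, x, x², …, x^{n−1} (so each σ(v) is a circulant matrix indexed by Z/nZ). Let v1, v2 ∈ RG and let A be an n×n reverse circulant matrix over R. Then the code C_σ generated by the rows of M(σ) is a self-dual code of length 4n if and only if σ((v1+v2)(v1+v2)*) + A² = I_n and v1 v2* = v2 v1*. -/

import Mathlib

open Matrix

/-- The dual of a code (submodule of `ι → R`) with respect to the standard bilinear form. -/
def dualCode {R : Type*} [CommRing R] {ι : Type*} [Fintype ι]
    (C : Submodule R (ι → R)) : Submodule R (ι → R) where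
  carrier := {x | ∀ c ∈ C, ∑ i, x i * c i = 0}
  add_mem' := by
    intro a b ha hb c hc
    simp only [Set.mem_setOf_eq] at ha hb ⊢
    simp [Pi.add_apply, add_mul, Finset.sum_add_distrib, ha c hc, hb c hc]
  zero_mem' := by
    intro c hc
    simp
  smul_mem' := by
    intro r a ha c hc
    simp only [Set.mem_setOf_eq] at ha ⊢
    simp [Pi.smul_apply, smul_eq_mul, mul_assoc, ← Finset.mul_sum, ha c hc]

/-- A code is self-dual if it equals its dual. -/
def IsSelfDual {R : Type*} [CommRing R] {ι : Type*} [Fintype ι]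
    (C : Submodule R (ι → R)) : Prop :=
  C = dualCode C

/-- The code generated by the rows of a matrix. -/
def rowSpan {R : Type*} [CommRing R] {κ ι : Type*} (M : Matrix κ ι R) :
    Submodule R (ι → R) :=
  Submodule.span R (Set.range M)

/-- The matrix `σ(v)` of a group ring element `v` with respect to a fixed enumeration `e`
of the group elements: its `(i,j)` entry is the coefficient of `v` at `(e i)⁻¹ * (e j)`. -/
def sigma {R : Type*} [CommRing R] {G : Type*} [Group G] {ι : Type*}
    (e : ι ≃ G) (v : MonoidAlgebra R G) : Matrix ι ι R :=
  Matrix.of fun i j => v.coeff ((e i)⁻¹ * e j)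

/-- The canonical involution `v ↦ v* = ∑ α_g g⁻¹` on a group ring. -/
def invol {R : Type*} [CommRing R] {G : Type*} [Group G]
    (v : MonoidAlgebra R G) : MonoidAlgebra R G :=
  MonoidAlgebra.ofCoeff (Finsupp.equivMapDomain (Equiv.inv G) v.coeff)

/-- A matrix indexed by `ZMod n` is reverse circulant if its `(i,j)` entry
depends only on `i + j`. -/
def IsRevCirculant {R : Type*} {n : ℕ} (A : Matrix (ZMod n) (ZMod n) R) : Prop :=
  ∃ a : ZMod n → R, ∀ i j, A i j = a (i + j)

/-- A matrix indexed by `ZMod n` is circulant if its `(i,j)` entry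
depends only on `j - i`. -/
def IsCirculant {R : Type*} {n : ℕ} (A : Matrix (ZMod n) (ZMod n) R) : Prop :=
  ∃ a : ZMod n → R, ∀ i j, A i j = a (j - i)

/-! The code generated by `(I | X)` is self-dual exactly when `X Xᵀ = -1`: the inclusion
`C ⊆ C^⊥` says `(I | X)(I | X)ᵀ = 0`, and conversely `X Xᵀ = -1` makes `X` invertible, so every
solution of the parity checks `y + X z = 0` is the codeword generated by `y`. The map `σ` is an
injective ring homomorphism turning `*` into transposition, and a reverse circulant `A` is symmetric
with `M A = A Mᵀ` for every circulant `M`. Hence in characteristic 2 all cross terms involving `A`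
cancel, and `X Xᵀ` has diagonal blocks `σ(v₁v₁* + v₂v₂*) + A²` and off-diagonal blocks
`σ(v₁v₂* + v₂v₁*)`; since `σ((v₁ + v₂)(v₁ + v₂)*)` is the sum of the two, `X Xᵀ = 1` is the
stated pair of conditions. -/

section SigmaHom

variable {R : Type*} [CommRing R] {G : Type*} [Group G] {ι : Type*}

lemma sigma_add (e : ι ≃ G) (v w : MonoidAlgebra R G) :
    sigma e (v + w) = sigma e v + sigma e w := by
  ext i j
  simp [sigma]

lemma sigma_mul [Fintype ι] (e : ι ≃ G) (v w : MonoidAlgebra R G) :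
    sigma e (v * w) = sigma e v * sigma e w := by
  have : Fintype G := .ofEquiv ι e
  ext i j
  rw [Matrix.mul_apply, sigma, of_apply, MonoidAlgebra.coeff_mul_apply_left,
    Finsupp.sum_fintype _ _ (by simp)]
  refine Fintype.sum_equiv ((Equiv.mulLeft (e i)).trans e.symm) _ _ fun g => ?_
  simp only [sigma, of_apply, Equiv.trans_apply, Equiv.coe_mulLeft, Equiv.apply_symm_apply]
  rw [inv_mul_cancel_left, _root_.mul_inv_rev, mul_assoc]

lemma sigma_invol (e : ι ≃ G) (v : MonoidAlgebra R G) : sigma e (invol v) = (sigma e v)ᵀ := by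
  ext i j
  simp [sigma, invol, _root_.mul_inv_rev]

lemma sigma_injective (e : ι ≃ G) : Function.Injective (sigma (R := R) e) := by
  intro v w h
  ext g
  simpa [sigma] using congr_fun₂ h (e.symm 1) (e.symm g)

end SigmaHom

section Circulant

variable {R : Type*} {n : ℕ}

lemma IsRevCirculant.transpose_eq {A : Matrix (ZMod n) (ZMod n) R} (hA : IsRevCirculant A) :
    Aᵀ = A := by
  obtain ⟨a, ha⟩ := hA
  ext i j
  rw [transpose_apply, ha, ha, add_comm]

lemma IsCirculant.mul_eq_mul_transpose [CommRing R] [NeZero n]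
    {M A : Matrix (ZMod n) (ZMod n) R} (hM : IsCirculant M) (hA : IsRevCirculant A) :
    M * A = A * Mᵀ := by
  obtain ⟨m, hm⟩ := hM
  obtain ⟨a, ha⟩ := hA
  ext i j
  rw [Matrix.mul_apply, Matrix.mul_apply]
  refine Fintype.sum_equiv (Equiv.addRight (j - i)) _ _ fun k => ?_
  rw [hm, ha, ha, transpose_apply, hm, Equiv.coe_addRight,
    show i + (k + (j - i)) = k + j by ring, show k + (j - i) - j = k - i by ring, mul_comm]

lemma isCirculant_sigma_ofAdd [CommRing R] (v : MonoidAlgebra R (Multiplicative (ZMod n))) :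
    IsCirculant (sigma Multiplicative.ofAdd v) :=
  ⟨fun d => v.coeff (Multiplicative.ofAdd d), fun i j =>
    congr_arg v.coeff (by rw [sub_eq_neg_add, ofAdd_add, ofAdd_neg])⟩

end Circulant

section Codes

variable {R : Type*} [CommRing R] {ι κ : Type*} [Fintype ι]

lemma dualCode_rowSpan (M : Matrix κ ι R) :
    dualCode (rowSpan M) = LinearMap.ker M.mulVecLin := by
  ext x
  change rowSpan M ≤ LinearMap.ker (dotProductBilin R R x) ↔ M *ᵥ x = 0
  rw [rowSpan, Submodule.span_le]
  refine Set.range_subset_iff.trans ?_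
  simp [funext_iff, mulVec, dotProduct_comm]

omit [Fintype ι] in
lemma rowSpan_eq_range_vecMulLinear [Fintype κ] (M : Matrix κ ι R) :
    rowSpan M = LinearMap.range M.vecMulLinear :=
  (range_vecMulLinear M).symm

lemma rowSpan_le_dualCode_iff (M : Matrix κ ι R) :
    rowSpan M ≤ dualCode (rowSpan M) ↔ M * Mᵀ = 0 := by
  rw [dualCode_rowSpan, rowSpan, Submodule.span_le]
  refine Set.range_subset_iff.trans ?_
  simp only [SetLike.mem_coe, LinearMap.mem_ker, mulVecLin_apply, funext_iff, ← ext_iff]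
  exact forall_comm

variable [Fintype κ] [DecidableEq κ]

lemma dualCode_le_rowSpan_fromCols_one {X : Matrix κ κ R} (hX : Xᵀ * X = -1) :
    dualCode (rowSpan (fromCols (1 : Matrix κ κ R) X)) ≤
      rowSpan (fromCols (1 : Matrix κ κ R) X) := by
  intro x hx
  obtain ⟨y, z, rfl⟩ : ∃ y z, x = Sum.elim y z := ⟨_, _, (Sum.elim_comp_inl_inr x).symm⟩
  rw [dualCode_rowSpan, LinearMap.mem_ker, mulVecLin_apply, fromCols_mulVec_sumElim, one_mulVec,
    add_eq_zero_iff_eq_neg] at hx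
  rw [rowSpan_eq_range_vecMulLinear]
  refine ⟨y, ?_⟩
  rw [vecMulLinear_apply, vecMul_fromCols, vecMul_one, ← mulVec_transpose]
  congr 1
  rw [hx, mulVec_neg, mulVec_mulVec, hX, neg_mulVec, one_mulVec, neg_neg]

lemma isSelfDual_rowSpan_fromCols_one_iff (X : Matrix κ κ R) :
    IsSelfDual (rowSpan (fromCols (1 : Matrix κ κ R) X)) ↔ X * Xᵀ = -1 := by
  have hself :
      fromCols (1 : Matrix κ κ R) X * (fromCols (1 : Matrix κ κ R) X)ᵀ = 1 + X * Xᵀ := by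
    rw [transpose_fromCols, fromCols_mul_fromRows, transpose_one, mul_one]
  have hle : rowSpan (fromCols (1 : Matrix κ κ R) X) ≤ dualCode (rowSpan (fromCols 1 X)) ↔
      X * Xᵀ = -1 := by
    rw [rowSpan_le_dualCode_iff, hself, eq_neg_iff_add_eq_zero, add_comm]
  refine ⟨fun h => hle.1 h.le, fun hX => le_antisymm (hle.2 hX) ?_⟩
  refine dualCode_le_rowSpan_fromCols_one ?_
  have : Xᵀ * -X = 1 := mul_eq_one_comm.1 (by rw [neg_mul, hX, neg_neg])
  rwa [mul_neg, neg_eq_iff_eq_neg] at this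

end Codes

section Blocks

variable {R : Type*} [CommRing R] {ι : Type*} [Fintype ι]

lemma fromBlocks_mul_transpose_self_eq_one_iff [DecidableEq ι] (B D : Matrix ι ι R) :
    fromBlocks B D D B * (fromBlocks B D D B)ᵀ = 1 ↔
      B * Bᵀ + D * Dᵀ = 1 ∧ B * Dᵀ + D * Bᵀ = 0 := by
  rw [fromBlocks_transpose, fromBlocks_multiply, ← fromBlocks_one, fromBlocks_inj,
    add_comm (D * Bᵀ), add_comm (D * Dᵀ)]
  tauto

variable [CharP R 2] {A B C : Matrix ι ι R}

lemma add_mul_transpose_add_of_charTwo (hA : Aᵀ = A) (hCA : C * A = A * Cᵀ) :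
    (C + A) * (C + A)ᵀ = C * Cᵀ + A * A := by
  rw [transpose_add, hA]
  calc (C + A) * (Cᵀ + A) = C * Cᵀ + (C * A + A * Cᵀ) + A * A := by noncomm_ring
    _ = C * Cᵀ + A * A := by rw [hCA, ← two_smul R, CharTwo.two_eq_zero, zero_smul, add_zero]

lemma mul_transpose_add_add_mul_transpose_of_charTwo (hA : Aᵀ = A) (hBA : B * A = A * Bᵀ) :
    B * (C + A)ᵀ + (C + A) * Bᵀ = B * Cᵀ + C * Bᵀ := by
  rw [transpose_add, hA]
  calc B * (Cᵀ + A) + (C + A) * Bᵀ = B * Cᵀ + C * Bᵀ + (B * A + A * Bᵀ) := by noncomm_ring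
    _ = B * Cᵀ + C * Bᵀ := by rw [hBA, ← two_smul R, CharTwo.two_eq_zero, zero_smul, add_zero]

end Blocks

theorem selfDual_cyclic_iff_general
    {R : Type*} [CommRing R] [CharP R 2]
    {n : ℕ} [NeZero n]
    (v1 v2 : MonoidAlgebra R (Multiplicative (ZMod n)))
    (A : Matrix (ZMod n) (ZMod n) R) (hA : IsRevCirculant A) :
    IsSelfDual (rowSpan (Matrix.fromCols (1 : Matrix (ZMod n ⊕ ZMod n) (ZMod n ⊕ ZMod n) R)
        (Matrix.fromBlocks (sigma Multiplicative.ofAdd v1) (sigma Multiplicative.ofAdd v2 + A)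
          (sigma Multiplicative.ofAdd v2 + A) (sigma Multiplicative.ofAdd v1)))) ↔
      (sigma Multiplicative.ofAdd ((v1 + v2) * invol (v1 + v2)) + A ^ 2 = 1 ∧
        v1 * invol v2 = v2 * invol v1) := by
  set B := sigma (R := R) Multiplicative.ofAdd v1
  set C := sigma (R := R) Multiplicative.ofAdd v2
  have hAt := hA.transpose_eq
  have hσ : sigma Multiplicative.ofAdd ((v1 + v2) * invol (v1 + v2)) + A * A =
      B * Bᵀ + C * Cᵀ + A * A + (B * Cᵀ + C * Bᵀ) := by
    rw [sigma_mul, sigma_invol, sigma_add, transpose_add]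
    noncomm_ring
  have hcomm : v1 * invol v2 = v2 * invol v1 ↔ B * Cᵀ + C * Bᵀ = 0 := by
    rw [← (sigma_injective Multiplicative.ofAdd).eq_iff, sigma_mul, sigma_mul, sigma_invol,
      sigma_invol, CharTwo.add_eq_zero]
  rw [isSelfDual_rowSpan_fromCols_one_iff, CharTwo.neg_eq,
    fromBlocks_mul_transpose_self_eq_one_iff,
    add_mul_transpose_add_of_charTwo hAt ((isCirculant_sigma_ofAdd v2).mul_eq_mul_transpose hA),
    mul_transpose_add_add_mul_transpose_of_charTwo hAt
      ((isCirculant_sigma_ofAdd v1).mul_eq_mul_transpose hA), sq, hσ, hcomm, ← add_assoc]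
  exact and_congr_left fun hQ => by rw [hQ, add_zero]

/-- Lemma 2.7: for the cyclic group of order `n` (realized as `Multiplicative (ZMod n)`
with its natural enumeration, so that each `σ(v)` is circulant), the code `C_σ` is
self-dual iff `σ((v₁+v₂)(v₁+v₂)*) + A² = I` and `v₁v₂* = v₂v₁*`. -/
theorem selfDual_cyclic_iff
    {R : Type*} [CommRing R] [Fintype R] [CharP R 2]
    (hFrob : Module.Injective R R)
    {n : ℕ} [NeZero n]
    (v1 v2 : MonoidAlgebra R (Multiplicative (ZMod n)))
    (A : Matrix (ZMod n) (ZMod n) R) (hA : IsRevCirculant A) :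
    IsSelfDual (rowSpan (Matrix.fromCols (1 : Matrix (ZMod n ⊕ ZMod n) (ZMod n ⊕ ZMod n) R)
        (Matrix.fromBlocks (sigma Multiplicative.ofAdd v1) (sigma Multiplicative.ofAdd v2 + A)
          (sigma Multiplicative.ofAdd v2 + A) (sigma Multiplicative.ofAdd v1)))) ↔
      (sigma Multiplicative.ofAdd ((v1 + v2) * invol (v1 + v2)) + A ^ 2 = 1 ∧
        v1 * invol v2 = v2 * invol v1) :=
  selfDual_cyclic_iff_general v1 v2 A hA
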